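/- For every μ in the positive root lattice of A_r, Lusztig's q-analogue of the Kostant partition function satisfies 𝒫(μ;q) = Σ_{T ∈ 𝒯(∞), −wt(T) = μ} q^{|T|} as polynomials in q (both sums are finite). -/

import Mathlib

/-- Marginally large semistandard Young tableaux of type `A_r`, on the alphabet
`{1 < 2 < ⋯ < r+1}`: exactly `r` rows (given as lists of entries), rows weakly
increasing, columns strictly increasing, first column `1, 2, …, r`, and the
number of `i`-entries in row `i` exceeds the number of boxes in row `i+1` by
exactly one. -/
structure TabA (r : ℕ) where
  row : Fin r → List ℕ
  entry_mem : ∀ i : Fin r, ∀ e ∈ row i, 1 ≤ e ∧ e ≤ r + 1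
  row_weak : ∀ i : Fin r, (row i).Chain' (· ≤ ·)
  first_col : ∀ i : Fin r, (row i).head? = some (i.1 + 1)
  col_le : ∀ i : Fin r, ∀ h : i.1 + 1 < r,
    (row ⟨i.1 + 1, h⟩).length ≤ (row i).length
  col_strict : ∀ i : Fin r, ∀ h : i.1 + 1 < r, ∀ j < (row ⟨i.1 + 1, h⟩).length,
    (row i).getD j 0 < (row ⟨i.1 + 1, h⟩).getD j 0
  marg_large : ∀ i : Fin r, (row i).count (i.1 + 1) =
    (if h : i.1 + 1 < r then (row ⟨i.1 + 1, h⟩).length else 0) + 1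

/-- `ℓ_{i,k}(T)`: the number of `k`-entries in row `i` (rows of `T` are indexed by
`Fin r`, row `i : Fin r` having label `i+1`). -/
def ellA (r : ℕ) (T : TabA r) (i : Fin r) (k : ℕ) : ℕ := (T.row i).count k

/-- `seg(T)`: the number of pairs `(i,k)` with `1 ≤ i < k ≤ r+1` and `ℓ_{i,k}(T) > 0`. -/
def segA (r : ℕ) (T : TabA r) : ℕ :=
  ∑ i : Fin r, ((Finset.Icc (i.1 + 2) (r + 1)).filter fun k => ellA r T i k ≠ 0).card

/-- The positive root `β_{i,k} = α_i + ⋯ + α_k` of `A_r`, as a vector of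
coordinates in the simple roots. -/
def betaA (r : ℕ) (i k : ℕ) : Fin r → ℕ :=
  fun j => if i ≤ j.1 + 1 ∧ j.1 + 1 ≤ k then 1 else 0

/-- The set of positive roots `{β_{i,k} : 1 ≤ i ≤ k ≤ r}` of `A_r`. -/
def posRootsA (r : ℕ) : Finset (Fin r → ℕ) :=
  ((Finset.Icc 1 r ×ˢ Finset.Icc 1 r).filter fun p => p.1 ≤ p.2).image
    fun p => betaA r p.1 p.2

/-- `Ξ(T)`, extended by zero to all vectors: `Ξ(T)(β_{i,k}) = ℓ_{i,k+1}(T)`. -/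
def XiA (r : ℕ) (T : TabA r) (v : Fin r → ℕ) : ℕ :=
  ∑ i : Fin r, ∑ k ∈ Finset.Icc (i.1 + 1) r,
    if v = betaA r (i.1 + 1) k then ellA r T i (k + 1) else 0

/-- `-wt(T) = Σ_{1≤i<k≤r+1} ℓ_{i,k}(T)·(α_i + ⋯ + α_{k-1})`, in simple-root
coordinates. -/
def negwtA (r : ℕ) (T : TabA r) : Fin r → ℕ :=
  ∑ i : Fin r, ∑ k ∈ Finset.Icc (i.1 + 2) (r + 1),
    ellA r T i k • betaA r (i.1 + 1) (k - 1)

/-- `wt(T)` as an integer vector in simple-root coordinates. -/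
def wtA (r : ℕ) (T : TabA r) : Fin r → ℤ :=
  fun j => -(negwtA r T j : ℤ)

/-- `|T|`: the number of boxes in the reduced form of `T`. -/
def sizeA (r : ℕ) (T : TabA r) : ℕ :=
  ∑ i : Fin r, ∑ k ∈ Finset.Icc (i.1 + 2) (r + 1), ellA r T i k

/-!
A marginally large tableau is determined by the multiplicities `ℓ_{i,k}`, `k > i`, of its
off-diagonal letters, and every family of multiplicities occurs: each row is sorted, and
marginal largeness fixes the number of diagonal letters `i` in row `i` as one more than the
length of row `i + 1`, so the rows can be rebuilt from the bottom up. Hence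
`T ↦ (β_{i,k-1} ↦ ℓ_{i,k}(T))`, i.e. `Ξ`, is a bijection from `𝒯(∞)` onto the Kostant
partitions, and it carries `-wt(T)` to `Σ c(α) α` and `|T|` to `Σ c(α)`.
-/

def replicateBlocks (g : ℕ → ℕ) (s n : ℕ) : List ℕ :=
  (List.range' s n).flatMap fun k => List.replicate (g k) k

lemma mem_replicateBlocks {g : ℕ → ℕ} {s n v : ℕ} (hv : v ∈ replicateBlocks g s n) :
    s ≤ v ∧ v < s + n := by
  obtain ⟨k, hk, hvk⟩ := List.mem_flatMap.1 hv
  rw [List.eq_of_mem_replicate hvk]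
  exact List.mem_range'_1.1 hk

lemma count_replicateBlocks (g : ℕ → ℕ) (s n v : ℕ) :
    (replicateBlocks g s n).count v = if s ≤ v ∧ v < s + n then g v else 0 := by
  induction n generalizing s with
  | zero => simp [replicateBlocks]
  | succ n ih =>
    have ih' := ih (s + 1)
    simp only [replicateBlocks] at ih' ⊢
    rw [List.range'_succ, List.flatMap_cons, List.count_append, ih', List.count_replicate]
    by_cases h : s = v
    · subst h; simp
    · simp only [beq_iff_eq, h, if_false]
      split_ifs <;> omega

lemma pairwise_replicateBlocks (g : ℕ → ℕ) (s n : ℕ) :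
    (replicateBlocks g s n).Pairwise (· ≤ ·) := by
  refine List.pairwise_flatMap.2 ⟨fun k _ => List.pairwise_replicate.2 (Or.inr le_rfl), ?_⟩
  refine (List.pairwise_lt_range' (s := s) (n := n)).imp fun hlt x hx y hy => ?_
  rw [List.eq_of_mem_replicate hx, List.eq_of_mem_replicate hy]
  exact hlt.le

section Construction

variable (r : ℕ) (f : ℕ → ℕ → ℕ)

/-- Row `i` carries the label `i + 1`, and `f i k` plays the role of `ℓ_{i+1,k}`. -/
def rowTail (i : ℕ) : List ℕ := replicateBlocks (f i) (i + 2) (r - i)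

/-- Marginal largeness forces row `i` to be one box longer than row `i + 1` plus its tail. -/
def rowLength (i : ℕ) : ℕ := ∑ j ∈ Finset.Ico i r, ((rowTail r f j).length + 1)

def rowOf (i : ℕ) : List ℕ := List.replicate (rowLength r f (i + 1) + 1) (i + 1) ++ rowTail r f i

variable {r}

lemma rowLength_of_le {i : ℕ} (h : r ≤ i) : rowLength r f i = 0 := by
  simp [rowLength, Finset.Ico_eq_empty_of_le h]

lemma rowLength_eq_add {i : ℕ} (hi : i < r) :
    rowLength r f i = (rowTail r f i).length + 1 + rowLength r f (i + 1) :=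
  Finset.sum_eq_sum_Ico_succ_bot hi _

lemma length_rowOf {i : ℕ} (hi : i < r) : (rowOf r f i).length = rowLength r f i := by
  rw [rowLength_eq_add f hi, rowOf, List.length_append, List.length_replicate]
  omega

lemma mem_rowOf {i x : ℕ} (hi : i < r) (hx : x ∈ rowOf r f i) : i + 1 ≤ x ∧ x ≤ r + 1 := by
  rcases List.mem_append.1 hx with h | h
  · rw [List.eq_of_mem_replicate h]; omega
  · have := mem_replicateBlocks h; omega

lemma count_rowOf {i : ℕ} (hi : i < r) (v : ℕ) :
    (rowOf r f i).count v =
      if v = i + 1 then rowLength r f (i + 1) + 1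
      else if i + 2 ≤ v ∧ v ≤ r + 1 then f i v else 0 := by
  rw [rowOf, List.count_append, List.count_replicate, rowTail, count_replicateBlocks]
  by_cases h : v = i + 1
  · simp [h]
  · simp only [beq_iff_eq, Ne.symm h, h, if_false]
    split_ifs <;> omega

lemma pairwise_rowOf (i : ℕ) : (rowOf r f i).Pairwise (· ≤ ·) := by
  refine List.pairwise_append.2
    ⟨List.pairwise_replicate.2 (Or.inr le_rfl), pairwise_replicateBlocks _ _ _, ?_⟩
  intro a ha b hb
  rw [List.eq_of_mem_replicate ha]
  have := mem_replicateBlocks hb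
  omega

lemma getD_rowOf {i j : ℕ} (hj : j < rowLength r f (i + 1) + 1) :
    (rowOf r f i).getD j 0 = i + 1 := by
  rw [rowOf, List.getD_append _ _ _ _ (by simpa using hj)]
  exact List.getD_replicate _ hj

def TabA.ofMult : TabA r where
  row i := rowOf r f i
  entry_mem i e he := by have := mem_rowOf f i.2 he; omega
  row_weak i := List.isChain_iff_pairwise.2 (pairwise_rowOf f i)
  first_col i := by simp [rowOf, List.replicate_succ]
  col_le i h := by
    rw [length_rowOf f h, length_rowOf f i.2, rowLength_eq_add f i.2]
    omega
  col_strict i h j hj := by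
    have hj' : j < rowLength r f (i.1 + 1) := length_rowOf f h ▸ hj
    rw [getD_rowOf f (by omega), List.getD_eq_getElem _ _ hj]
    have := mem_rowOf f h (List.getElem_mem hj)
    omega
  marg_large i := by
    rw [count_rowOf f i.2, if_pos rfl]
    split_ifs with h
    · rw [length_rowOf f h]
    · rw [rowLength_of_le f (by omega)]

lemma ellA_ofMult (i : Fin r) {k : ℕ} (hk₁ : i.1 + 2 ≤ k) (hk₂ : k ≤ r + 1) :
    ellA r (TabA.ofMult f) i k = f i k := by
  rw [ellA, TabA.ofMult, count_rowOf f i.2, if_neg (by omega), if_pos ⟨hk₁, hk₂⟩]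

end Construction

namespace TabA

variable {r : ℕ}

lemma le_of_mem_row (T : TabA r) (i : Fin r) {x : ℕ} (hx : x ∈ T.row i) : i.1 + 1 ≤ x := by
  have hsorted := List.isChain_iff_pairwise.1 (T.row_weak i)
  have hhead := T.first_col i
  cases hrow : T.row i with
  | nil => simp [hrow] at hhead
  | cons a t =>
    rw [hrow] at hhead hsorted hx
    obtain rfl : a = i.1 + 1 := by simpa using hhead
    rcases List.mem_cons.1 hx with rfl | hx
    · exact le_rfl
    · exact List.rel_of_pairwise_cons hsorted hx

/-- Rows are sorted, so each is determined by its letter counts; the count of the diagonal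
letter `i + 1` is fixed by marginal largeness from the length of the next row, whence the
downward induction. -/
lemma row_eq_of_ellA {T T' : TabA r}
    (h : ∀ i : Fin r, ∀ k, i.1 + 2 ≤ k → k ≤ r + 1 → ellA r T i k = ellA r T' i k)
    (i : Fin r) : T.row i = T'.row i := by
  refine List.Perm.eq_of_pairwise' (List.isChain_iff_pairwise.1 (T.row_weak i))
    (List.isChain_iff_pairwise.1 (T'.row_weak i)) (List.perm_iff_count.2 fun v => ?_)
  by_cases hdiag : v = i.1 + 1
  · subst hdiag
    rw [T.marg_large, T'.marg_large]
    split_ifs with hnext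
    · rw [row_eq_of_ellA h ⟨i.1 + 1, hnext⟩]
    · rfl
  by_cases hv : i.1 + 2 ≤ v ∧ v ≤ r + 1
  · exact h i v hv.1 hv.2
  have hout : ∀ S : TabA r, v ∉ S.row i := fun S hS => by
    have := S.le_of_mem_row i hS
    have := (S.entry_mem i v hS).2
    omega
  rw [List.count_eq_zero.2 (hout T), List.count_eq_zero.2 (hout T')]
termination_by r - i.1

theorem ext_of_ellA {T T' : TabA r}
    (h : ∀ i : Fin r, ∀ k, i.1 + 2 ≤ k → k ≤ r + 1 → ellA r T i k = ellA r T' i k) :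
    T = T' := by
  have hrow : T.row = T'.row := funext (row_eq_of_ellA h)
  cases T; cases T'
  congr

end TabA

section Roots

variable {r : ℕ}

lemma betaA_injOn {a b a' b' : ℕ} (ha : 1 ≤ a) (hab : a ≤ b) (hb : b ≤ r)
    (ha' : 1 ≤ a') (hab' : a' ≤ b') (hb' : b' ≤ r) (h : betaA r a b = betaA r a' b') :
    a = a' ∧ b = b' := by
  -- compare the coordinates at both ends of each of the two segments
  have e₁ := congrFun h ⟨a - 1, by omega⟩
  have e₂ := congrFun h ⟨b - 1, by omega⟩
  have e₃ := congrFun h ⟨a' - 1, by omega⟩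
  have e₄ := congrFun h ⟨b' - 1, by omega⟩
  simp only [betaA] at e₁ e₂ e₃ e₄
  split_ifs at e₁ e₂ e₃ e₄ <;> omega

lemma betaA_mem_posRootsA {a b : ℕ} (ha : 1 ≤ a) (hab : a ≤ b) (hb : b ≤ r) :
    betaA r a b ∈ posRootsA r := by
  refine Finset.mem_image.2 ⟨(a, b), ?_, rfl⟩
  simp only [Finset.mem_filter, Finset.mem_product, Finset.mem_Icc]
  omega

lemma sum_posRootsA {M : Type*} [AddCommMonoid M] (g : (Fin r → ℕ) → M) :
    ∑ v ∈ posRootsA r, g v =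
      ∑ i : Fin r, ∑ k ∈ Finset.Icc (i.1 + 2) (r + 1), g (betaA r (i.1 + 1) (k - 1)) := by
  rw [Finset.sum_sigma']
  symm
  refine Finset.sum_bij (fun p _ => betaA r (p.1.1 + 1) (p.2 - 1)) ?_ ?_ ?_ (fun _ _ => rfl)
  · rintro ⟨i, k⟩ hp
    simp only [Finset.mem_sigma, Finset.mem_Icc] at hp ⊢
    exact betaA_mem_posRootsA (by omega) (by omega) (by omega)
  · rintro ⟨i, k⟩ hp ⟨i', k'⟩ hp' heq
    simp only [Finset.mem_sigma, Finset.mem_Icc] at hp hp' heq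
    obtain ⟨hi, hk⟩ := betaA_injOn (by omega) (by omega) (by omega) (by omega) (by omega)
      (by omega) heq
    obtain rfl : i = i' := Fin.ext (by omega)
    obtain rfl : k = k' := by omega
    rfl
  · intro v hv
    obtain ⟨⟨a, b⟩, hab, rfl⟩ := Finset.mem_image.1 hv
    simp only [Finset.mem_filter, Finset.mem_product, Finset.mem_Icc] at hab
    refine ⟨⟨⟨a - 1, by omega⟩, b + 1⟩, ?_, ?_⟩
    · simp only [Finset.mem_sigma, Finset.mem_univ, Finset.mem_Icc, true_and]; omega
    · simp only
      congr 1
      omega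

lemma XiA_betaA (T : TabA r) (i : Fin r) {k : ℕ} (hk₁ : i.1 + 1 ≤ k) (hk₂ : k ≤ r) :
    XiA r T (betaA r (i.1 + 1) k) = ellA r T i (k + 1) := by
  have hne : ∀ (i' : Fin r) (k' : ℕ), k' ∈ Finset.Icc (i'.1 + 1) r →
      betaA r (i.1 + 1) k = betaA r (i'.1 + 1) k' → i' = i ∧ k' = k := fun i' k' hk' heq => by
    rw [Finset.mem_Icc] at hk'
    obtain ⟨hi, hk⟩ := betaA_injOn (by omega) hk₁ hk₂ (by omega) hk'.1 hk'.2 heq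
    exact ⟨Fin.ext (by omega), hk.symm⟩
  rw [XiA, Fintype.sum_eq_single i fun i' hi' => Finset.sum_eq_zero fun k' hk' =>
      if_neg fun heq => hi' (hne i' k' hk' heq).1,
    Finset.sum_eq_single_of_mem k (Finset.mem_Icc.2 ⟨hk₁, hk₂⟩) fun k' hk' hk'k =>
      if_neg fun heq => hk'k (hne i k' hk' heq).2, if_pos rfl]

end Roots

section Kostant

variable {r : ℕ}

noncomputable def TabA.ofKostant (c : {v // v ∈ posRootsA r} → ℕ) : TabA r :=
  TabA.ofMult fun i k => Function.extend Subtype.val c 0 (betaA r (i + 1) (k - 1))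

lemma ellA_ofKostant (c : {v // v ∈ posRootsA r} → ℕ) (i : Fin r) {k : ℕ} (hk₁ : i.1 + 2 ≤ k)
    (hk₂ : k ≤ r + 1) :
    ellA r (TabA.ofKostant c) i k =
      c ⟨betaA r (i.1 + 1) (k - 1), betaA_mem_posRootsA (by omega) (by omega) (by omega)⟩ := by
  rw [TabA.ofKostant, ellA_ofMult _ i hk₁ hk₂]
  exact Subtype.val_injective.extend_apply c 0 ⟨_, _⟩

lemma sum_ellA_ofKostant {M : Type*} [AddCommMonoid M] (c : {v // v ∈ posRootsA r} → ℕ)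
    (g : ℕ → (Fin r → ℕ) → M) :
    ∑ i : Fin r, ∑ k ∈ Finset.Icc (i.1 + 2) (r + 1),
        g (ellA r (TabA.ofKostant c) i k) (betaA r (i.1 + 1) (k - 1)) =
      ∑ α : {v // v ∈ posRootsA r}, g (c α) α.1 := by
  have hc : ∀ α : {v // v ∈ posRootsA r}, c α = Function.extend Subtype.val c 0 α.1 :=
    fun α => (Subtype.val_injective.extend_apply c 0 α).symm
  simp_rw [hc, Finset.sum_coe_sort (posRootsA r) fun v => g (Function.extend Subtype.val c 0 v) v,
    sum_posRootsA]
  refine Finset.sum_congr rfl fun i _ => Finset.sum_congr rfl fun k hk => ?_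
  rw [Finset.mem_Icc] at hk
  rw [ellA_ofKostant c i hk.1 hk.2, hc]

lemma negwtA_ofKostant (c : {v // v ∈ posRootsA r} → ℕ) :
    negwtA r (TabA.ofKostant c) = ∑ α : {v // v ∈ posRootsA r}, c α • α.1 :=
  sum_ellA_ofKostant c fun n v => n • v

lemma sizeA_ofKostant (c : {v // v ∈ posRootsA r} → ℕ) :
    sizeA r (TabA.ofKostant c) = ∑ α : {v // v ∈ posRootsA r}, c α :=
  sum_ellA_ofKostant c fun n _ => n

noncomputable def kostantEquivTabA : ({v // v ∈ posRootsA r} → ℕ) ≃ TabA r where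
  toFun := TabA.ofKostant
  invFun T α := XiA r T α.1
  left_inv c := funext fun ⟨v, hv⟩ => by
    obtain ⟨⟨a, b⟩, hab, rfl⟩ := Finset.mem_image.1 hv
    simp only [Finset.mem_filter, Finset.mem_product, Finset.mem_Icc] at hab
    obtain ⟨n, rfl⟩ : ∃ n, a = n + 1 := ⟨a - 1, by omega⟩
    have hn : n < r := by omega
    dsimp only
    rw [XiA_betaA _ ⟨n, hn⟩ (by simp only; omega) (by omega),
      ellA_ofKostant c ⟨n, hn⟩ (by simp only; omega) (by omega)]
    simp only [Nat.add_sub_cancel]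
  right_inv T := TabA.ext_of_ellA fun i k hk₁ hk₂ => by
    dsimp only
    rw [ellA_ofKostant _ i hk₁ hk₂, XiA_betaA T i (by omega) (by omega), Nat.sub_add_cancel (by omega)]

end Kostant

theorem stmt11_general (r : ℕ) :
    ∀ μ : Fin r → ℕ, ∀ d : ℕ,
      Nat.card {c : {v // v ∈ posRootsA r} → ℕ //
          (∑ α : {v // v ∈ posRootsA r}, c α • α.1) = μ ∧
          (∑ α : {v // v ∈ posRootsA r}, c α) = d}
      = Nat.card {T : TabA r // negwtA r T = μ ∧ sizeA r T = d} := by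
  intro μ d
  refine Nat.card_congr (kostantEquivTabA.subtypeEquiv fun c => ?_)
  rw [kostantEquivTabA, Equiv.coe_fn_mk, negwtA_ofKostant, sizeA_ofKostant]

/-- for every `μ` in the positive root lattice of `A_r`,
Lusztig's `q`-analogue of the Kostant partition function satisfies
`𝒫(μ;q) = Σ_{T ∈ 𝒯(∞), -wt(T) = μ} q^{|T|}`, stated coefficientwise in `q`:
for each `d`, the number of Kostant partitions `c` of `μ` with `Σ_α c(α) = d`
equals the number of `T ∈ 𝒯(∞)` with `-wt(T) = μ` and `|T| = d`. -/
theorem stmt11 (r : ℕ) (hr : 1 ≤ r) :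
    ∀ μ : Fin r → ℕ, ∀ d : ℕ,
      Nat.card {c : {v // v ∈ posRootsA r} → ℕ //
          (∑ α : {v // v ∈ posRootsA r}, c α • α.1) = μ ∧
          (∑ α : {v // v ∈ posRootsA r}, c α) = d}
      = Nat.card {T : TabA r // negwtA r T = μ ∧ sizeA r T = d} :=
  stmt11_general r
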